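/- arXiv:0901.4805 — 3 statements merged into one kernel-verified Lean document; each statement's English description precedes it below -/
import Mathlib

section
/- Let H : ℝ^d × ℝ^d → ℝ be concave in λ, satisfy |H(x,λ₁)−H(x,λ₂)| ≤ C₁|λ₁−λ₂| and |H(x₁,λ)−H(x₂,λ)| ≤ C₂|x₁−x₂|(1+|λ|), and define L(x,α) = sup_λ(−α·λ + H(x,λ)). Then for any x₁, x₂, α₁ ∈ ℝ^d and any β > 0 there exists α₂ ∈ ℝ^d with |α₂ − α₁| ≤ C₂|x₂ − x₁| + β and L(x₂, α₂) ≤ L(x₁, α₁) + C₂|x₂ − x₁|. -/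
/-!
By the Lipschitz bound in `x`, the concave function `H x₂` lies below the convex function
`m + ε + ⟪α₁, ·⟫ + ε ‖·‖`, where `m = L x₁ α₁` and `ε = C₂ ‖x₂ - x₁‖`. Separating the hypograph
of the former from the strict epigraph of the latter (Hahn–Banach) yields an affine function
`c + ⟪α₂, ·⟫` between them. An affine function below the convex one has `c ≤ m + ε` and slope
within `ε` of `α₁`; the first inequality gives `L x₂ α₂ ≤ m + ε`.
-/

open Set InnerProductSpace

theorem ConcaveOn.exists_affine_between {E : Type*} [TopologicalSpace E] [AddCommGroup E]
    [Module ℝ E] [IsTopologicalAddGroup E] [ContinuousSMul ℝ E] {h g : E → ℝ}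
    (hh : ConcaveOn ℝ univ h) (hg : ConvexOn ℝ univ g) (hgc : Continuous g) (hhg : h ≤ g) :
    ∃ (φ : StrongDual ℝ E) (c : ℝ), ∀ x, h x ≤ φ x + c ∧ φ x + c ≤ g x := by
  have hopen : IsOpen {p : E × ℝ | p.1 ∈ univ ∧ g p.1 < p.2} := by
    simpa using isOpen_lt (hgc.comp continuous_fst) continuous_snd
  have hdisj : Disjoint {p : E × ℝ | p.1 ∈ univ ∧ g p.1 < p.2}
      {p : E × ℝ | p.1 ∈ univ ∧ p.2 ≤ h p.1} :=
    disjoint_left.2 fun p hp hp' => (hp'.2.trans (hhg p.1)).not_gt hp.2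
  obtain ⟨F, u, hFepi, hFhypo⟩ :=
    geometric_hahn_banach_open hg.convex_strict_epigraph hopen hh.convex_hypograph hdisj
  set k := F (0, 1)
  have hsplit : ∀ x t, F (x, t) = F (x, 0) + t * k := fun x t => by
    rw [← smul_eq_mul, ← map_smul, ← map_add, Prod.smul_mk, smul_zero, smul_eq_mul, mul_one,
      Prod.mk_add_mk, add_zero, zero_add]
  have hepi : ∀ x t, g x < t → F (x, 0) + t * k < u := fun x t ht =>
    hsplit x t ▸ hFepi (x, t) ⟨mem_univ x, ht⟩
  have hhypo : ∀ x, u ≤ F (x, 0) + h x * k := fun x =>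
    hsplit x (h x) ▸ hFhypo (x, h x) ⟨mem_univ x, le_rfl⟩
  -- the separating hyperplane is not vertical
  have hk : k < 0 := by
    have := hepi 0 (max (g 0) (h 0) + 1) (by linarith [le_max_left (g 0) (h 0)])
    nlinarith [hhypo 0, le_max_right (g 0) (h 0)]
  refine ⟨-k⁻¹ • F.comp (ContinuousLinearMap.inl ℝ E ℝ), u / k, fun x => ?_⟩
  have hφ : (-k⁻¹ • F.comp (ContinuousLinearMap.inl ℝ E ℝ)) x + u / k = (u - F (x, 0)) / k := by
    simp only [smul_apply, ContinuousLinearMap.comp_apply, ContinuousLinearMap.inl_apply,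
      smul_eq_mul]
    ring
  rw [hφ]
  constructor
  · rw [le_div_iff_of_neg hk]
    linarith [hhypo x]
  · refine le_of_not_gt fun hlt => ?_
    have := hepi x _ hlt
    rw [div_mul_cancel₀ _ hk.ne] at this
    linarith

theorem norm_le_of_real_inner_le_add_mul_norm {E : Type*} [NormedAddCommGroup E]
    [InnerProductSpace ℝ E] {v : E} {K r : ℝ} (hr : 0 ≤ r) (h : ∀ l, ⟪v, l⟫_ℝ ≤ K + r * ‖l‖) :
    ‖v‖ ≤ r := by
  have hsq : ‖v‖ ^ 2 - r * ‖v‖ ≤ 0 := by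
    by_contra! hpos
    set t := (|K| + 1) / (‖v‖ ^ 2 - r * ‖v‖)
    have ht : 0 < t := by positivity
    have hv := h (t • v)
    rw [real_inner_smul_right, real_inner_self_eq_norm_sq, norm_smul,
      Real.norm_of_nonneg ht.le] at hv
    have ht' : t * (‖v‖ ^ 2 - r * ‖v‖) = |K| + 1 := div_mul_cancel₀ _ hpos.ne'
    nlinarith [le_abs_self K]
  nlinarith [norm_nonneg v]

theorem ConcaveOn.exists_le_inner_of_le_inner_add_mul_norm {E : Type*} [NormedAddCommGroup E]
    [InnerProductSpace ℝ E] [CompleteSpace E] {h : E → ℝ} (hh : ConcaveOn ℝ univ h) {α : E}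
    {M r : ℝ} (hr : 0 ≤ r) (hle : ∀ l, h l ≤ M + ⟪α, l⟫_ℝ + r * ‖l‖) :
    ∃ α' : E, ‖α' - α‖ ≤ r ∧ ∀ l, h l ≤ M + ⟪α', l⟫_ℝ := by
  have hconv : ConvexOn ℝ univ fun l => M + ⟪α, l⟫_ℝ + r * ‖l‖ :=
    ((convexOn_const M convex_univ).add ((innerₛₗ ℝ α).convexOn convex_univ)).add
      ((convexOn_norm convex_univ).smul hr)
  obtain ⟨φ, c, hφ⟩ := hh.exists_affine_between hconv (by fun_prop) hle
  set α' := (toDual ℝ E).symm φ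
  have hφ' : ∀ l, φ l = ⟪α', l⟫_ℝ := fun l => toDual_symm_apply.symm
  have hcM : c ≤ M := by simpa using (hφ 0).2
  refine ⟨α', norm_le_of_real_inner_le_add_mul_norm (K := M - c) hr fun l => ?_, fun l => ?_⟩
  · rw [inner_sub_left, ← hφ']
    linarith [(hφ l).2]
  · linarith [(hφ l).1, hφ' l]

theorem stmt4_general {d : ℕ} (H : EuclideanSpace ℝ (Fin d) → EuclideanSpace ℝ (Fin d) → ℝ)
    (C₂ : ℝ)
    (hconc : ∀ x, ConcaveOn ℝ Set.univ (H x))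
    (hLipx : ∀ x₁ x₂ l : EuclideanSpace ℝ (Fin d),
      |H x₁ l - H x₂ l| ≤ C₂ * ‖x₁ - x₂‖ * (1 + ‖l‖))
    (L : EuclideanSpace ℝ (Fin d) → EuclideanSpace ℝ (Fin d) → EReal)
    (hL : ∀ x α, L x α = ⨆ l : EuclideanSpace ℝ (Fin d),
      ((-(inner ℝ α l : ℝ) + H x l : ℝ) : EReal)) :
    ∀ x₁ x₂ α₁ : EuclideanSpace ℝ (Fin d), ∀ β : ℝ, 0 < β →
      ∃ α₂ : EuclideanSpace ℝ (Fin d),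
        ‖α₂ - α₁‖ ≤ C₂ * ‖x₂ - x₁‖ + β ∧
        L x₂ α₂ ≤ L x₁ α₁ + ((C₂ * ‖x₂ - x₁‖ : ℝ) : EReal) := by
  intro x₁ x₂ α₁ β hβ
  set ε := C₂ * ‖x₂ - x₁‖
  have hH : ∀ l, H x₂ l ≤ H x₁ l + ε * (1 + ‖l‖) := fun l => by
    linarith [neg_abs_le (H x₁ l - H x₂ l), norm_sub_rev x₁ x₂ ▸ hLipx x₁ x₂ l]
  have hε : 0 ≤ ε := by
    have h₀ := hLipx x₁ x₂ 0
    rw [norm_zero, add_zero, mul_one, norm_sub_rev] at h₀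
    exact (abs_nonneg _).trans h₀
  have hle : ∀ l, ((-⟪α₁, l⟫_ℝ + H x₁ l : ℝ) : EReal) ≤ L x₁ α₁ := fun l =>
    hL x₁ α₁ ▸ le_iSup (fun l => ((-⟪α₁, l⟫_ℝ + H x₁ l : ℝ) : EReal)) l
  induction hS : L x₁ α₁ using EReal.rec with
  | bot => exact absurd (hS ▸ hle 0) (by simp)
  | top => exact ⟨α₁, by simpa using by linarith, by simp⟩
  | coe m =>
    have hm : ∀ l, H x₂ l ≤ (m + ε) + ⟪α₁, l⟫_ℝ + ε * ‖l‖ := fun l => by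
      linarith [hH l, EReal.coe_le_coe_iff.1 (hS ▸ hle l)]
    obtain ⟨α₂, hα₂, hα₂m⟩ := (hconc x₂).exists_le_inner_of_le_inner_add_mul_norm hε hm
    refine ⟨α₂, by linarith, ?_⟩
    rw [hL, ← EReal.coe_add]
    exact iSup_le fun l => EReal.coe_le_coe_iff.2 (by linarith [hα₂m l])

/-- Lemma `alphaexistence`: existence of a nearby control `α₂`
with controlled running cost. -/
theorem stmt4 {d : ℕ} (H : EuclideanSpace ℝ (Fin d) → EuclideanSpace ℝ (Fin d) → ℝ)
    (C₁ C₂ : ℝ)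
    (hconc : ∀ x, ConcaveOn ℝ Set.univ (H x))
    (hLipLam : ∀ x l₁ l₂ : EuclideanSpace ℝ (Fin d), |H x l₁ - H x l₂| ≤ C₁ * ‖l₁ - l₂‖)
    (hLipx : ∀ x₁ x₂ l : EuclideanSpace ℝ (Fin d),
      |H x₁ l - H x₂ l| ≤ C₂ * ‖x₁ - x₂‖ * (1 + ‖l‖))
    (L : EuclideanSpace ℝ (Fin d) → EuclideanSpace ℝ (Fin d) → EReal)
    (hL : ∀ x α, L x α = ⨆ l : EuclideanSpace ℝ (Fin d),
      ((-(inner ℝ α l : ℝ) + H x l : ℝ) : EReal)) :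
    ∀ x₁ x₂ α₁ : EuclideanSpace ℝ (Fin d), ∀ β : ℝ, 0 < β →
      ∃ α₂ : EuclideanSpace ℝ (Fin d),
        ‖α₂ - α₁‖ ≤ C₂ * ‖x₂ - x₁‖ + β ∧
        L x₂ α₂ ≤ L x₁ α₁ + ((C₂ * ‖x₂ - x₁‖ : ℝ) : EReal) :=
  stmt4_general H C₂ hconc hLipx L hL
end

section
/- Let f₁, …, f_m : ℝ^d → ℝ be convex functions with no common direction of recession. Then exactly one of the following holds: (a) there exists x ∈ ℝ^d with f_i(x) ≤ 0 for all i; (b) there exist nonnegative reals l₁,…,l_m and ε > 0 such that Σ_i l_i f_i(x) ≥ ε for all x ∈ ℝ^d. -/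
open Set Filter Metric Bornology

/-- A vector `y ≠ 0` is a direction of recession of a convex `f : ℝ^d → ℝ` if
`t ↦ f (x + t • y)` is nondecreasing for every base point `x`. -/
def IsDirectionOfRecession {d : ℕ} (f : EuclideanSpace ℝ (Fin d) → ℝ)
    (y : EuclideanSpace ℝ (Fin d)) : Prop :=
  y ≠ 0 ∧ ∀ x : EuclideanSpace ℝ (Fin d), Monotone fun t : ℝ => f (x + t • y)

/-- If a finite convex function is bounded above on a ray, it is nonincreasing in
the direction of the ray from every base point. -/
lemma recession_transfer {d : ℕ} {f : EuclideanSpace ℝ (Fin d) → ℝ}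
    (hconv : ConvexOn ℝ Set.univ f) (hcont : Continuous f)
    {x0 u : EuclideanSpace ℝ (Fin d)} {c : ℝ}
    (hray : ∀ t : ℝ, 0 ≤ t → f (x0 + t • u) ≤ c) :
    ∀ y, ∀ τ : ℝ, 0 ≤ τ → f (y + τ • u) ≤ f y := by
  intro y τ hτ
  rcases eq_or_lt_of_le hτ with h0 | hτpos
  · simp [← h0]
  have key : ∀ μ : ℝ, τ ≤ μ →
      f (y + τ • u + (τ / μ) • (x0 - y)) ≤ (1 - τ / μ) * f y + (τ / μ) * c := by
    intro μ hμ
    have hμ0 : 0 < μ := lt_of_lt_of_le hτpos hμ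
    have hb0 : 0 ≤ τ / μ := div_nonneg hτ hμ0.le
    have hb1 : τ / μ ≤ 1 := (div_le_one hμ0).mpr hμ
    have hcc := hconv.2 (Set.mem_univ y) (Set.mem_univ (x0 + μ • u))
      (by linarith : (0:ℝ) ≤ 1 - τ / μ) hb0 (by ring)
    have heq : (1 - τ / μ) • y + (τ / μ) • (x0 + μ • u)
        = y + τ • u + (τ / μ) • (x0 - y) := by
      have hτμ : (τ / μ) * μ = τ := div_mul_cancel₀ τ hμ0.ne'
      rw [sub_smul, one_smul, smul_add, smul_smul, hτμ, smul_sub]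
      abel
    rw [heq] at hcc
    simp only [smul_eq_mul] at hcc
    refine hcc.trans ?_
    have : f (x0 + μ • u) ≤ c := hray μ (hτ.trans hμ)
    nlinarith
  have hlim1 : Tendsto (fun μ : ℝ => τ / μ) atTop (nhds 0) :=
    tendsto_const_nhds.div_atTop tendsto_id
  have hlimpt : Tendsto (fun μ : ℝ => y + τ • u + (τ / μ) • (x0 - y)) atTop
      (nhds (y + τ • u)) := by
    have : Tendsto (fun μ : ℝ => (τ / μ) • (x0 - y)) atTop (nhds ((0:ℝ) • (x0 - y))) :=
      hlim1.smul_const _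
    simpa using tendsto_const_nhds.add this
  have hlimL : Tendsto (fun μ : ℝ => f (y + τ • u + (τ / μ) • (x0 - y))) atTop
      (nhds (f (y + τ • u))) := (hcont.tendsto _).comp hlimpt
  have hlimR : Tendsto (fun μ : ℝ => (1 - τ / μ) * f y + (τ / μ) * c) atTop
      (nhds ((1 - 0) * f y + 0 * c)) := by
    exact ((tendsto_const_nhds.sub hlim1).mul tendsto_const_nhds).add
      (hlim1.mul tendsto_const_nhds)
  have := le_of_tendsto_of_tendsto hlimL hlimR
    (eventually_atTop.mpr ⟨τ, fun μ hμ => key μ hμ⟩)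
  simpa using this

/-- An unbounded closed convex set contains a ray from any of its points. -/
lemma exists_ray {d : ℕ} {S : Set (EuclideanSpace ℝ (Fin d))} (hS : Convex ℝ S)
    (hclosed : IsClosed S) {x0 : EuclideanSpace ℝ (Fin d)} (hx0 : x0 ∈ S)
    (hunb : ¬ Bornology.IsBounded S) :
    ∃ u : EuclideanSpace ℝ (Fin d), ‖u‖ = 1 ∧ ∀ t : ℝ, 0 ≤ t → x0 + t • u ∈ S := by
  have hbig : ∀ n : ℕ, ∃ x ∈ S, (n + 1 : ℝ) ≤ ‖x - x0‖ := by
    intro n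
    by_contra hcon
    push_neg at hcon
    refine hunb ((isBounded_closedBall (x := x0) (r := n + 1)).subset ?_)
    intro x hx
    rw [Metric.mem_closedBall, dist_eq_norm]
    exact (hcon x hx).le
  choose x hxS hxn using hbig
  set r : ℕ → ℝ := fun n => ‖x n - x0‖ with hr
  have hrpos : ∀ n, 0 < r n := fun n => lt_of_lt_of_le (by positivity) (hxn n)
  set v : ℕ → EuclideanSpace ℝ (Fin d) := fun n => (r n)⁻¹ • (x n - x0) with hv
  have hvmem : ∀ n, v n ∈ Metric.sphere (0 : EuclideanSpace ℝ (Fin d)) 1 := by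
    intro n
    rw [mem_sphere_zero_iff_norm]
    rw [hv]
    simp only [norm_smul, norm_inv, Real.norm_eq_abs, abs_of_pos (hrpos n)]
    exact inv_mul_cancel₀ (hrpos n).ne'
  obtain ⟨u, humem, φ, hφ, hconv_u⟩ :=
    (isCompact_sphere (0 : EuclideanSpace ℝ (Fin d)) 1).tendsto_subseq hvmem
  refine ⟨u, mem_sphere_zero_iff_norm.mp humem, fun t ht => ?_⟩
  have hmem : ∀ᶠ n in atTop, x0 + t • v (φ n) ∈ S := by
    filter_upwards [eventually_ge_atTop (Nat.ceil t)] with n hn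
    have hrt : t ≤ r (φ n) := by
      have h1 : (n : ℝ) ≤ (φ n : ℝ) := by exact_mod_cast (hφ.id_le n)
      have h2 : t ≤ (n : ℝ) + 1 := by
        calc t ≤ (Nat.ceil t : ℝ) := Nat.le_ceil t
        _ ≤ (n : ℝ) := by exact_mod_cast hn
        _ ≤ (n : ℝ) + 1 := by linarith
      calc t ≤ (n : ℝ) + 1 := h2
      _ ≤ (φ n : ℝ) + 1 := by linarith
      _ ≤ r (φ n) := hxn (φ n)
    set a : ℝ := t / r (φ n) with ha
    have ha0 : 0 ≤ a := div_nonneg ht (hrpos _).le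
    have ha1 : a ≤ 1 := (div_le_one (hrpos _)).mpr hrt
    have := hS hx0 (hxS (φ n)) (by linarith : (0:ℝ) ≤ 1 - a) ha0 (by ring)
    have heq : (1 - a) • x0 + a • x (φ n) = x0 + t • v (φ n) := by
      have hv' : t • v (φ n) = a • (x (φ n) - x0) := by
        simp only [hv, smul_smul, ha, div_eq_mul_inv]
      rw [hv', sub_smul, one_smul, smul_sub]
      abel
    rwa [heq] at this
  have hlim : Tendsto (fun n => x0 + t • v (φ n)) atTop (nhds (x0 + t • u)) :=
    tendsto_const_nhds.add (hconv_u.const_smul t)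
  exact hclosed.mem_of_tendsto hlim hmem

/-- Fan–Glicksberg–Hoffman convex theorem of the alternative. -/
lemma fan_alternative {d m : ℕ} (F : Fin m → EuclideanSpace ℝ (Fin d) → ℝ)
    (hconv : ∀ i, ConvexOn ℝ Set.univ (F i))
    (h : ¬ ∃ x, ∀ i, F i x < 0) :
    ∃ l : Fin m → ℝ, (∀ i, 0 ≤ l i) ∧ 0 < ∑ i, l i ∧
      ∀ x, 0 ≤ ∑ i, l i * F i x := by
  classical
  set C : Set (Fin m → ℝ) := {z | ∃ x, ∀ i, F i x < z i} with hC
  have hCopen : IsOpen C := by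
    have : C = ⋃ x, ⋂ i, {z : Fin m → ℝ | F i x < z i} := by
      ext z; simp [hC, Set.mem_iInter]
    rw [this]
    exact isOpen_iUnion fun x => isOpen_iInter_of_finite fun i =>
      isOpen_lt continuous_const (continuous_apply i)
  have hCconv : Convex ℝ C := by
    rintro z1 ⟨x1, hx1⟩ z2 ⟨x2, hx2⟩ a b ha hb hab
    refine ⟨a • x1 + b • x2, fun i => ?_⟩
    have hle := (hconv i).2 (Set.mem_univ x1) (Set.mem_univ x2) ha hb hab
    have : a * F i x1 + b * F i x2 < a * z1 i + b * z2 i := by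
      rcases lt_or_eq_of_le ha with ha' | ha'
      · exact add_lt_add_of_lt_of_le
          ((mul_lt_mul_iff_right₀ ha').mpr (hx1 i))
          (mul_le_mul_of_nonneg_left (hx2 i).le hb)
      · have hb' : 0 < b := by rw [← ha'] at hab; linarith
        rw [← ha']
        simpa using (mul_lt_mul_iff_right₀ hb').mpr (hx2 i)
    calc F i (a • x1 + b • x2) ≤ a * F i x1 + b * F i x2 := hle
    _ < a * z1 i + b * z2 i := this
  have h0 : (0 : Fin m → ℝ) ∉ C := by
    rintro ⟨x, hx⟩
    exact h ⟨x, fun i => by simpa using hx i⟩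
  obtain ⟨L, hL⟩ := geometric_hahn_banach_open_point hCconv hCopen h0
  have hLneg : ∀ z ∈ C, L z < 0 := by
    intro z hz; simpa using hL z hz
  set e : Fin m → Fin m → ℝ := fun i => fun j => if i = j then 1 else 0 with he
  set l : Fin m → ℝ := fun i => -(L (e i)) with hl
  have hdecomp : ∀ z : Fin m → ℝ, L z = ∑ i, z i * L (e i) := by
    intro z
    conv_lhs => rw [pi_eq_sum_univ z]
    rw [map_sum]
    exact Finset.sum_congr rfl fun i _ => by rw [map_smul]; rfl
  -- a basic member of C
  have hz0 : (fun i => F i 0 + 1) ∈ C := ⟨0, fun i => by simp⟩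
  have hLz0 : L (fun i => F i 0 + 1) < 0 := hLneg _ hz0
  have hlnonneg : ∀ i, 0 ≤ l i := by
    intro i
    by_contra hcon
    push_neg at hcon
    have hLe : 0 < L (e i) := by simp only [hl] at hcon; linarith
    set t : ℝ := (1 - L (fun i => F i 0 + 1)) / L (e i) with hts
    have ht0 : 0 ≤ t := div_nonneg (by linarith) hLe.le
    have hmem : (fun j => F j 0 + 1) + t • e i ∈ C := by
      refine ⟨0, fun j => ?_⟩
      have : 0 ≤ t * e i j := by
        rw [he]; dsimp only
        rcases eq_or_ne i j with rfl | hij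
        · simp [ht0]
        · simp [hij]
      have := this
      simp only [Pi.add_apply, Pi.smul_apply, smul_eq_mul]
      linarith
    have := hLneg _ hmem
    rw [map_add, map_smul, smul_eq_mul, hts, div_mul_cancel₀ _ hLe.ne'] at this
    linarith
  have hLne : ∃ i, l i ≠ 0 := by
    by_contra hcon
    push_neg at hcon
    have : ∀ i, L (e i) = 0 := by
      intro i; have := hcon i; simp only [hl] at this; linarith
    have : L (fun i => F i 0 + 1) = 0 := by
      rw [hdecomp]; simp [this]
    linarith
  have hsum_pos : 0 < ∑ i, l i := by
    obtain ⟨i, hi⟩ := hLne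
    exact Finset.sum_pos' (fun j _ => hlnonneg j)
      ⟨i, Finset.mem_univ i, lt_of_le_of_ne (hlnonneg i) (Ne.symm hi)⟩
  refine ⟨l, hlnonneg, hsum_pos, fun x => ?_⟩
  have hkey : ∀ δ : ℝ, 0 < δ → -(δ * ∑ i, l i) < ∑ i, l i * F i x := by
    intro δ hδ
    have hmem : (fun i => F i x + δ) ∈ C := ⟨x, fun i => by simp [hδ]⟩
    have := hLneg _ hmem
    rw [hdecomp] at this
    have heq : ∑ i, (F i x + δ) * L (e i) = -(∑ i, l i * F i x) - δ * ∑ i, l i := by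
      simp only [hl, Finset.mul_sum, ← Finset.sum_neg_distrib]
      rw [← Finset.sum_sub_distrib]
      refine Finset.sum_congr rfl fun i _ => by ring
    rw [heq] at this
    linarith
  by_contra hcon
  push_neg at hcon
  have hδ : 0 < -(∑ i, l i * F i x) / (2 * ∑ i, l i) :=
    div_pos (by linarith) (by linarith)
  have h1 := hkey _ hδ
  have h2 : -(∑ i, l i * F i x) / (2 * ∑ i, l i) * (∑ i, l i)
      = -(∑ i, l i * F i x) / 2 := by
    field_simp
  rw [h2] at h1
  linarith

/-- finite version of Rockafellar's Helly-type alternative: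
for convex `f₁,…,f_m` with no common direction of recession, exactly one of
(a) a common point where all `f_i ≤ 0`, or (b) a nonnegative combination
bounded below by some `ε > 0` on all of `ℝ^d`, holds. -/
theorem stmt5 {d m : ℕ} (f : Fin m → EuclideanSpace ℝ (Fin d) → ℝ)
    (hconv : ∀ i, ConvexOn ℝ Set.univ (f i))
    (hrec : ¬∃ y : EuclideanSpace ℝ (Fin d), ∀ i, IsDirectionOfRecession (f i) y) :
    Xor' (∃ x : EuclideanSpace ℝ (Fin d), ∀ i, f i x ≤ 0)
      (∃ l : Fin m → ℝ, (∀ i, 0 ≤ l i) ∧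
        ∃ ε : ℝ, 0 < ε ∧ ∀ x : EuclideanSpace ℝ (Fin d), ε ≤ ∑ i, l i * f i x) := by
  classical
  by_cases hA : ∃ x : EuclideanSpace ℝ (Fin d), ∀ i, f i x ≤ 0
  · left
    refine ⟨hA, ?_⟩
    rintro ⟨l, hl, ε, hε, hsum⟩
    obtain ⟨x, hx⟩ := hA
    have : ∑ i, l i * f i x ≤ 0 :=
      Finset.sum_nonpos fun i _ => mul_nonpos_of_nonneg_of_nonpos (hl i) (hx i)
    linarith [hsum x]
  · right
    refine ⟨?_, hA⟩
    -- m ≥ 1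
    have hm : Nonempty (Fin m) := by
      by_contra hcon
      exact hA ⟨0, fun i => absurd ⟨i⟩ hcon⟩
    have hne : (Finset.univ : Finset (Fin m)).Nonempty := Finset.univ_nonempty
    have hcontf : ∀ i, Continuous (f i) := fun i =>
      continuousOn_univ.mp ((hconv i).continuousOn isOpen_univ)
    set g : EuclideanSpace ℝ (Fin d) → ℝ :=
      fun x => Finset.univ.sup' hne (fun i => f i x) with hg
    have hgcont : Continuous g := continuous_iff_continuousAt.mpr fun x =>
      ContinuousAt.finset_sup'_apply hne fun i _ => (hcontf i).continuousAt
    have hgpos : ∀ x, 0 < g x := by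
      intro x
      push_neg at hA
      obtain ⟨i, hi⟩ := hA x
      refine lt_of_lt_of_le hi ?_
      simp only [hg]
      exact Finset.le_sup' (fun j => f j x) (Finset.mem_univ i)
    set c : ℝ := g 0 with hc
    set S : Set (EuclideanSpace ℝ (Fin d)) := {x | ∀ i, f i x ≤ c} with hS
    have h0S : (0 : EuclideanSpace ℝ (Fin d)) ∈ S := by
      simp only [hS, Set.mem_setOf_eq, hc, hg]
      exact fun i => Finset.le_sup' (fun j => f j 0) (Finset.mem_univ i)
    have hSeq : S = ⋂ i, {x | f i x ≤ c} := by
      ext x; simp [hS, Set.mem_iInter]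
    have hSclosed : IsClosed S := by
      rw [hSeq]
      exact isClosed_iInter fun i => isClosed_le (hcontf i) continuous_const
    have hSconv : Convex ℝ S := by
      rw [hSeq]
      refine convex_iInter fun i => ?_
      have := (hconv i).convex_le c
      simpa using this
    -- Key claim: a uniform positive lower bound for the max
    have key : ∃ ε₀ : ℝ, 0 < ε₀ ∧ ∀ x, ∃ i, ε₀ ≤ f i x := by
      by_cases hb : Bornology.IsBounded S
      · have hcompact : IsCompact S := isCompact_of_isClosed_isBounded hSclosed hb
        obtain ⟨xs, hxsS, hmin⟩ := hcompact.exists_isMinOn ⟨0, h0S⟩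
          hgcont.continuousOn
        refine ⟨g xs, hgpos xs, fun x => ?_⟩
        have hgx : g xs ≤ g x := by
          by_cases hxS : x ∈ S
          · exact hmin hxS
          · have : ∃ i, c < f i x := by
              simp only [hS, Set.mem_setOf_eq] at hxS
              push_neg at hxS
              exact hxS
            obtain ⟨i, hi⟩ := this
            calc g xs ≤ g 0 := hmin h0S
            _ = c := hc.symm
            _ ≤ f i x := hi.le
            _ ≤ g x := by
              simp only [hg]
              exact Finset.le_sup' (fun j => f j x) (Finset.mem_univ i)
        obtain ⟨i, _, hieq⟩ := Finset.exists_mem_eq_sup' hne (fun i => f i x)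
        refine ⟨i, ?_⟩
        rw [← hieq]
        simpa only [hg] using hgx
      · -- unbounded: derive a common direction of recession, contradiction
        exfalso
        obtain ⟨u, hunorm, hray⟩ := exists_ray hSconv hSclosed h0S hb
        have hdec : ∀ i, ∀ y, ∀ τ : ℝ, 0 ≤ τ → f i (y + τ • u) ≤ f i y := by
          intro i
          refine recession_transfer (hconv i) (hcontf i)
            (x0 := 0) (u := u) (c := c) ?_
          intro t ht
          have := hray t ht
          simp only [hS, Set.mem_setOf_eq] at this
          exact this i
        refine hrec ⟨-u, fun i => ⟨?_, ?_⟩⟩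
        · intro hcon
          rw [neg_eq_zero] at hcon
          rw [hcon] at hunorm
          simp at hunorm
        · intro x s t hst
          have heq : x + s • (-u) = (x + t • (-u)) + (t - s) • u := by
            rw [smul_neg, smul_neg, sub_smul]
            abel
          dsimp only
          rw [heq]
          exact hdec i (x + t • (-u)) (t - s) (sub_nonneg.mpr hst)
    obtain ⟨ε₀, hε₀, hkey⟩ := key
    have hFconv : ∀ i, ConvexOn ℝ Set.univ (fun x => f i x - ε₀) := by
      intro i
      have := (hconv i).sub (concaveOn_const ε₀ convex_univ)
      simpa [Pi.sub_def] using this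
    have hnoneg : ¬ ∃ x, ∀ i, (fun x => f i x - ε₀) x < 0 := by
      rintro ⟨x, hx⟩
      obtain ⟨i, hi⟩ := hkey x
      have := hx i
      simp only at this
      linarith
    obtain ⟨l, hl0, hlsum, hineq⟩ := fan_alternative (fun i x => f i x - ε₀)
      hFconv hnoneg
    refine ⟨l, hl0, ε₀ * ∑ i, l i, by positivity, fun x => ?_⟩
    have := hineq x
    have heq : ∑ i, l i * (f i x - ε₀) = (∑ i, l i * f i x) - (∑ i, l i) * ε₀ := by
      rw [Finset.sum_mul, ← Finset.sum_sub_distrib]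
      exact Finset.sum_congr rfl fun i _ => by ring
    rw [heq] at this
    linarith
end

section
/- Let H : ℝ^d × ℝ^d → ℝ satisfy |H(x,λ₁) − H(x,λ₂)| ≤ C₁|λ₁−λ₂| for all x, λ₁, λ₂, let R > 0, K > 0, and define H̃(x,λ) = H(x,λ) − K(max(|λ| − R, 0))². Then for every ε > 0 there exists K₀ such that for all K ≥ K₀, every maximizer λ* of λ ↦ −α·λ + H̃(x,λ) (for any x, α ∈ ℝ^d with |α| ≤ C₁) satisfies |λ*| ≤ R + ε. -/
/-!
Comparing a maximizer `l⋆` with `l = 0`, where the penalty vanishes, the Lipschitz bound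
on `H` and `‖α‖ ≤ C₁` give `K m² ≤ 2 C₁ ‖l⋆‖ ≤ 2 C₁ (m + R)` for the excess `m = max (‖l⋆‖ - R) 0`.
Since `m ↦ (m + R) / m²` is decreasing, `m > ε` would force `K ε² ≤ 2 C₁ (ε + R)`.
-/

lemma le_of_mul_sq_le_of_lt {C R K ε m : ℝ} (hC : 0 ≤ C) (hR : 0 ≤ R) (hε : 0 < ε)
    (hK : 2 * C * (ε + R) < K * ε ^ 2) (h : K * m ^ 2 ≤ 2 * C * (m + R)) : m ≤ ε := by
  by_contra! hεm
  have hgrowth : 0 ≤ ε * m * (m - ε) + R * (m ^ 2 - ε ^ 2) :=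
    add_nonneg (mul_nonneg (mul_pos hε (hε.trans hεm)).le (by linarith))
      (mul_nonneg hR (by nlinarith))
  nlinarith [mul_lt_mul_of_pos_right hK (pow_pos (hε.trans hεm) 2),
    mul_le_mul_of_nonneg_right h (sq_nonneg ε), mul_nonneg hC hgrowth]

section

variable {E : Type*} [NormedAddCommGroup E] [InnerProductSpace ℝ E]

lemma penalty_le_of_forall_le {f : E → ℝ} {α lstar : E} {C R K : ℝ} (hR : 0 ≤ R)
    (hf : |f lstar - f 0| ≤ C * ‖lstar‖) (hα : ‖α‖ ≤ C)
    (hmax : ∀ l : E, -(inner ℝ α l : ℝ) + (f l - K * max (‖l‖ - R) 0 ^ 2) ≤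
      -(inner ℝ α lstar : ℝ) + (f lstar - K * max (‖lstar‖ - R) 0 ^ 2)) :
    K * max (‖lstar‖ - R) 0 ^ 2 ≤ 2 * C * ‖lstar‖ := by
  have h0 := hmax 0
  rw [inner_zero_right, norm_zero, max_eq_right (by linarith)] at h0
  have hinner : -(inner ℝ α lstar : ℝ) ≤ C * ‖lstar‖ :=
    calc -(inner ℝ α lstar : ℝ) ≤ ‖α‖ * ‖lstar‖ :=
          (neg_le_abs _).trans (abs_real_inner_le_norm α lstar)
      _ ≤ C * ‖lstar‖ := mul_le_mul_of_nonneg_right hα (norm_nonneg _)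
  linarith [le_of_abs_le hf]

end

/-- penalizing the Hamiltonian quadratically outside the ball of
radius `R` localizes maximizers of the conjugate problem (with `‖α‖ ≤ C₁`) to
the ball of radius `R + ε`, for the penalty constant `K` large enough. -/
theorem stmt14 {d : ℕ} (H : EuclideanSpace ℝ (Fin d) → EuclideanSpace ℝ (Fin d) → ℝ)
    (C₁ R : ℝ) (hR : 0 < R)
    (hLip : ∀ x l₁ l₂ : EuclideanSpace ℝ (Fin d), |H x l₁ - H x l₂| ≤ C₁ * ‖l₁ - l₂‖) :
    ∀ ε : ℝ, 0 < ε → ∃ K₀ : ℝ, 0 < K₀ ∧ ∀ K : ℝ, K₀ ≤ K →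
      ∀ x α lstar : EuclideanSpace ℝ (Fin d), ‖α‖ ≤ C₁ →
        (∀ l : EuclideanSpace ℝ (Fin d),
          -(inner ℝ α l : ℝ) + (H x l - K * max (‖l‖ - R) 0 ^ 2) ≤
            -(inner ℝ α lstar : ℝ) + (H x lstar - K * max (‖lstar‖ - R) 0 ^ 2)) →
        ‖lstar‖ ≤ R + ε := by
  intro ε hε
  refine ⟨(2 * |C₁| * (ε + R) + 1) / ε ^ 2, by positivity, ?_⟩
  intro K hK x α lstar hα hmax
  have hC : 0 ≤ C₁ := (norm_nonneg α).trans hα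
  have hKε : 2 * C₁ * (ε + R) < K * ε ^ 2 := by
    rw [div_le_iff₀ (by positivity), abs_of_nonneg hC] at hK
    linarith
  have hpenalty := penalty_le_of_forall_le hR.le (by simpa using hLip x lstar 0) hα hmax
  have hnorm : ‖lstar‖ ≤ max (‖lstar‖ - R) 0 + R := by linarith [le_max_left (‖lstar‖ - R) 0]
  have hexcess := le_of_mul_sq_le_of_lt hC hR.le hε hKε
    (hpenalty.trans (mul_le_mul_of_nonneg_left hnorm (by positivity)))
  linarith
end
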